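/- Let V be a finite-dimensional rational module over a torus T, λ a nonzero cocharacter of T, v ∈ V a nonzero T-unstable vector with optimal direction μ(v) (the minimal-norm point of the Newton polytope K(v)), and k = m(v, λ_T(v)) where λ_T(v) is the primitive cocharacter proportional to μ(v). If v' ∈ v + ⊕_{i > k} V(λ_T(v), i), where V(λ, i) denotes the λ-weight-i subspace of V, then λ_T(v') = λ_T(v). -/

import Mathlib

open scoped RealInnerProductSpace

/-!
Every point `x` of `conv S` satisfies `⟪x, μ⟫ ≥ ‖μ‖²`, and `μ` itself is a convex combination of
the weights of `S` on the hyperplane `⟪·, μ⟫ = ‖μ‖²`. These weights, and all weights below the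
hyperplane, are the same for `S'`, so `conv S'` contains `μ` and lies in the same half-space.
Hence `‖μ'‖ ≤ ‖μ‖` and `‖μ‖² ≤ ⟪μ', μ⟫`, which together force `μ' = μ`.
-/

theorem Convex.sq_norm_le_inner_of_forall_norm_le {E : Type*} [NormedAddCommGroup E]
    [InnerProductSpace ℝ E] {K : Set E} (hK : Convex ℝ K) {m : E} (hm : m ∈ K)
    (hmin : ∀ x ∈ K, ‖m‖ ≤ ‖x‖) {x : E} (hx : x ∈ K) : ‖m‖ ^ 2 ≤ ⟪x, m⟫ := by
  -- `m` is the nearest point of `K` to `0`, so the variational inequality of projections applies.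
  have hinf : ‖(0 : E) - m‖ = ⨅ w : K, ‖(0 : E) - w‖ := by
    have : Nonempty K := ⟨⟨m, hm⟩⟩
    refine le_antisymm (le_ciInf fun w => by simpa using hmin w w.2) ?_
    exact ciInf_le ⟨0, Set.forall_mem_range.2 fun _ => norm_nonneg _⟩ (⟨m, hm⟩ : K)
  have := (norm_eq_iInf_iff_real_inner_le_zero hK hm).1 hinf x hx
  rw [zero_sub, inner_neg_left, inner_sub_right, real_inner_self_eq_norm_sq,
    real_inner_comm] at this
  linarith

theorem mem_convexHull_sep_le_of_forall_le {𝕜 E : Type*} [Field 𝕜] [LinearOrder 𝕜]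
    [IsStrictOrderedRing 𝕜] [AddCommGroup E] [Module 𝕜 E] {s : Finset E} {f : E →ₗ[𝕜] 𝕜}
    {c : 𝕜} (hs : ∀ x ∈ s, c ≤ f x) {p : E} (hp : p ∈ convexHull 𝕜 (s : Set E))
    (hfp : f p ≤ c) : p ∈ convexHull 𝕜 {x ∈ (s : Set E) | f x ≤ c} := by
  classical
  obtain ⟨w, hw0, hw1, rfl⟩ := Finset.mem_convexHull.1 hp
  have hslack_nonneg : ∀ y ∈ s, 0 ≤ w y * (f y - c) := fun y hy =>
    mul_nonneg (hw0 y hy) (sub_nonneg.2 (hs y hy))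
  have hslack_sum : ∑ y ∈ s, w y * (f y - c) = f (s.centerMass w id) - c := by
    simp only [Finset.centerMass_eq_of_sum_1 _ _ hw1, id, map_sum, map_smul, smul_eq_mul,
      mul_sub, Finset.sum_sub_distrib, ← Finset.sum_mul, hw1, one_mul]
  have hslack_zero : ∀ y ∈ s, w y * (f y - c) = 0 :=
    (Finset.sum_eq_zero_iff_of_nonneg hslack_nonneg).1 <|
      le_antisymm (by linarith) (Finset.sum_nonneg hslack_nonneg)
  rw [← Finset.centerMass_filter_ne_zero]
  refine Finset.centerMass_mem_convexHull _ (fun y hy => hw0 y (Finset.mem_filter.1 hy).1)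
    (by rw [Finset.sum_filter_ne_zero, hw1]; exact one_pos) fun y hy => ?_
  obtain ⟨hy, hwy⟩ := Finset.mem_filter.1 hy
  have := (mul_eq_zero.1 (hslack_zero y hy)).resolve_left hwy
  exact ⟨hy, (sub_eq_zero.1 this).le⟩

theorem eq_of_norm_le_of_sq_norm_le_inner {E : Type*} [NormedAddCommGroup E]
    [InnerProductSpace ℝ E] {a b : E} (hnorm : ‖a‖ ≤ ‖b‖) (hinner : ‖b‖ ^ 2 ≤ ⟪a, b⟫) :
    a = b := by
  have hsq : ‖a‖ ^ 2 ≤ ‖b‖ ^ 2 := pow_le_pow_left₀ (norm_nonneg a) hnorm 2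
  have hdist : ‖a - b‖ ^ 2 ≤ 0 := by rw [norm_sub_sq_real]; linarith
  exact sub_eq_zero.1 <| norm_eq_zero.1 <|
    (pow_eq_zero_iff two_ne_zero).1 (le_antisymm hdist (sq_nonneg _))

theorem stmt5_general {E : Type*} [NormedAddCommGroup E] [InnerProductSpace ℝ E]
    (S S' : Finset E) (μ μ' : E)
    (hμ : μ ∈ convexHull ℝ (S : Set E))
    (hμmin : ∀ x ∈ convexHull ℝ (S : Set E), ‖μ‖ ≤ ‖x‖)
    (hμ' : μ' ∈ convexHull ℝ (S' : Set E))
    (hμ'min : ∀ x ∈ convexHull ℝ (S' : Set E), ‖μ'‖ ≤ ‖x‖)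
    (hlow : {x ∈ (S : Set E) | ⟪x, μ⟫ ≤ ‖μ‖ ^ 2}
          = {x ∈ (S' : Set E) | ⟪x, μ⟫ ≤ ‖μ‖ ^ 2}) :
    μ' = μ := by
  have hS : ∀ x ∈ S, ‖μ‖ ^ 2 ≤ ⟪x, μ⟫ := fun x hx =>
    (convex_convexHull ℝ _).sq_norm_le_inner_of_forall_norm_le hμ hμmin
      (subset_convexHull ℝ _ hx)
  have hS' : ∀ x ∈ S', ‖μ‖ ^ 2 ≤ ⟪x, μ⟫ := by
    intro x hx
    by_contra! hlt
    have hxS : x ∈ {x ∈ (S : Set E) | ⟪x, μ⟫ ≤ ‖μ‖ ^ 2} := hlow ▸ ⟨hx, hlt.le⟩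
    exact hlt.not_ge (hS x hxS.1)
  have hμ'μ : ‖μ‖ ^ 2 ≤ ⟪μ', μ⟫ :=
    convexHull_min hS' (convex_halfSpace_ge ((innerₗ E).flip μ).isLinear _) hμ'
  have hμS' : μ ∈ convexHull ℝ (S' : Set E) := by
    have := mem_convexHull_sep_le_of_forall_le (f := (innerₗ E).flip μ) hS hμ
      (real_inner_self_eq_norm_sq μ).le
    simp only [LinearMap.flip_apply, innerₗ_apply_apply, hlow] at this
    exact convexHull_mono (Set.sep_subset _ _) this
  exact eq_of_norm_le_of_sq_norm_le_inner (hμ'min μ hμS') hμ'μ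

/-- Tsujii's lemma: work in the cocharacter space of a torus `T`,
with the weights of a rational `T`-module identified with points of a
finite-dimensional real inner product space.  Let `S` be the (finite, nonempty)
set of weights of a `T`-unstable vector `v` and `μ ≠ 0` the minimal-norm point
of its Newton polytope, so that the optimal primitive cocharacter `λ_T(v)` is
the primitive multiple of `μ` and `k = m(v, λ_T(v))` corresponds to the level
`⟪·, μ⟫ = ‖μ‖²`.  If `v' ∈ v + ⊕_{i > k} V(λ_T(v), i)`, i.e. the weight set
`S'` of `v'` agrees with `S` at all levels `⟪x, μ⟫ ≤ ‖μ‖²`, then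
`λ_T(v') = λ_T(v)`: the minimal-norm point `μ'` of the Newton polytope of `v'`
equals `μ`. -/
theorem stmt5 {E : Type*} [NormedAddCommGroup E] [InnerProductSpace ℝ E]
    [FiniteDimensional ℝ E] (S S' : Finset E) (μ μ' : E)
    (hμ : μ ∈ convexHull ℝ (S : Set E))
    (hμmin : ∀ x ∈ convexHull ℝ (S : Set E), ‖μ‖ ≤ ‖x‖)
    (hμ' : μ' ∈ convexHull ℝ (S' : Set E))
    (hμ'min : ∀ x ∈ convexHull ℝ (S' : Set E), ‖μ'‖ ≤ ‖x‖)
    (hne : μ ≠ 0)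
    (hlow : {x ∈ (S : Set E) | ⟪x, μ⟫ ≤ ‖μ‖ ^ 2}
          = {x ∈ (S' : Set E) | ⟪x, μ⟫ ≤ ‖μ‖ ^ 2}) :
    μ' = μ :=
  stmt5_general S S' μ μ' hμ hμmin hμ' hμ'min hlow
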